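/- If ♣_w holds, then ◇(T) holds for every binary Kurepa tree T. -/

import Mathlib

/-!
Code the nodes of `T` injectively by countable ordinals, sending the level `T_β` into the block
`[ω * β, ω * (β + 1))`. For a branch `f`, the codes of its initial segments form an uncountable set
`B_f`, so by `♣_w` the limits `α` with `A_α \ B_f` finite form a stationary set. Let `t_α` be a
node of level `α` such that almost all points of `A_α` code proper initial segments of `t_α`, if
there is one. At a guessing `α` with `ω * α = α`, the node `f ↾ α` qualifies, and every node `u`
that qualifies equals `f ↾ α`: cofinally many points of `A_α` code an initial segment of both `u`
and `f`, and the block coding forces the levels of these segments to be cofinal in `α`.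
-/

noncomputable section

open Cardinal Set

/-- The first uncountable ordinal `ω₁`. -/
def omega1 : Ordinal := (Cardinal.aleph 1).ord

/-- A transfinite binary sequence: a function `t : α → 2` for some ordinal `α`. -/
abbrev BinSeq : Type 1 := Σ α : Ordinal, (Set.Iio α → Bool)

namespace BinSeq

/-- The restriction `t ↾ β` of a binary sequence `t` to an initial segment of its domain. -/
def restrict (t : BinSeq) (β : Ordinal) (h : β ≤ t.1) : BinSeq :=
  ⟨β, fun x => t.2 ⟨x.1, lt_of_lt_of_le x.2 h⟩⟩

/-- `s.sub t`: `s` is an initial segment of `t` (that is, `s ⊆ t`). -/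
def sub (s t : BinSeq) : Prop := ∃ h : s.1 ≤ t.1, t.restrict s.1 h = s

/-- `s.ssub t`: `s` is a proper initial segment of `t` (that is, `s ⊊ t`). -/
def ssub (s t : BinSeq) : Prop := ∃ h : s.1 < t.1, t.restrict s.1 h.le = s

end BinSeq

/-- A candidate branch: a function `f : ω₁ → 2`. -/
abbrev BinBranch : Type 1 := Set.Iio omega1 → Bool

/-- The restriction `f ↾ α` of `f : ω₁ → 2` to an ordinal `α < ω₁`. -/
def BinBranch.restrict (f : BinBranch) (α : Ordinal) (h : α < omega1) : BinSeq :=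
  ⟨α, fun x => f ⟨x.1, lt_trans x.2 h⟩⟩

/-- `C` is a closed unbounded (club) subset of `ω₁`: it is a set of countable ordinals,
unbounded in `ω₁`, and closed under suprema of bounded nonempty subsets. -/
def IsClubBelow (C : Set Ordinal) : Prop :=
  C ⊆ Set.Iio omega1 ∧
  (∀ β < omega1, ∃ α ∈ C, β < α) ∧
  (∀ s : Set Ordinal, s ⊆ C → s.Nonempty → sSup s < omega1 → sSup s ∈ C)

/-- `S` is a stationary subset of `ω₁`: it meets every club subset of `ω₁`. -/
def IsStationaryBelow (S : Set Ordinal) : Prop :=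
  ∀ C : Set Ordinal, IsClubBelow C → (S ∩ C).Nonempty

/-- `T` is a binary ℵ₁-tree: a downward closed family of binary sequences of
countable length, all of whose levels are countable. -/
structure IsBinaryAleph1Tree (T : Set BinSeq) : Prop where
  dom_lt : ∀ t ∈ T, t.1 < omega1
  downward_closed : ∀ t ∈ T, ∀ β, ∀ h : β ≤ t.1, t.restrict β h ∈ T
  countable_levels : ∀ α < omega1, {t | t ∈ T ∧ t.1 = α}.Countable

/-- The set of cofinal branches of a binary tree:
functions `f : ω₁ → 2` all of whose initial segments lie in `T`. -/
def BinBranches (T : Set BinSeq) : Set BinBranch :=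
  {f | ∀ α, ∀ h : α < omega1, f.restrict α h ∈ T}

/-- A binary Kurepa tree: a binary ℵ₁-tree with at least ℵ₂-many cofinal branches. -/
def IsBinaryKurepa (T : Set BinSeq) : Prop :=
  IsBinaryAleph1Tree T ∧ Cardinal.aleph 2 ≤ #(↥(BinBranches T))

/-- `◇(T)` for a binary tree `T`: there is a transversal `⟨t_α | α < ω₁⟩` with `t_α ∈ T_α`
such that for every cofinal branch `f` of `T`, the set `{α < ω₁ | f ↾ α = t_α}` is stationary. -/
def BinDiamond (T : Set BinSeq) : Prop :=
  ∃ t : Ordinal → BinSeq,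
    (∀ α < omega1, t α ∈ T ∧ (t α).1 = α) ∧
    ∀ f ∈ BinBranches T,
      IsStationaryBelow {α | ∃ h : α < omega1, BinBranch.restrict f α h = t α}

/-- An abstract tree: a strict partial order in which the set of predecessors
of every point is well-ordered. -/
structure OTree where
  carrier : Type
  lt : carrier → carrier → Prop
  lt_trans : ∀ {x y z}, lt x y → lt y z → lt x z
  lt_irrefl : ∀ x, ¬ lt x x
  pred_wellOrder : ∀ x, IsWellOrder {y // lt y x} fun a b => lt a.1 b.1

namespace OTree

/-- The height of a node: the order type of its set of predecessors. -/
def height (t : OTree) (x : t.carrier) : Ordinal :=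
  @Ordinal.type {y // t.lt y x} (fun a b => t.lt a.1 b.1) (t.pred_wellOrder x)

/-- The `α`-th level of the tree. -/
def level (t : OTree) (α : Ordinal) : Set t.carrier := {x | t.height x = α}

/-- An ℵ₁-tree: a tree of height `ω₁` all of whose levels are countable. -/
def IsAleph1Tree (t : OTree) : Prop :=
  (∀ x, t.height x < omega1) ∧
  (∀ α < omega1, (t.level α).Nonempty) ∧
  (∀ α < omega1, (t.level α).Countable)

/-- A tree is Hausdorff if nodes of the same limit height
with the same predecessors are equal. -/
def Hausdorff (t : OTree) : Prop :=
  ∀ x y : t.carrier, Order.IsSuccLimit (t.height x) → t.height x = t.height y →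
    {z | t.lt z x} = {z | t.lt z y} → x = y

/-- The set of cofinal branches: uncountable maximal chains. -/
def branches (t : OTree) : Set (Set t.carrier) :=
  {C | IsMaxChain t.lt C ∧ ¬ C.Countable}

/-- A Kurepa tree: an ℵ₁-tree with at least ℵ₂-many cofinal branches. -/
def IsKurepa (t : OTree) : Prop :=
  t.IsAleph1Tree ∧ Cardinal.aleph 2 ≤ #(↥t.branches)

/-- `◇(𝐓)`: there is a transversal `⟨b_α | α < ω₁⟩` with `b_α ∈ T_α` such that for every
cofinal branch `f`, the set `{α < ω₁ | f ↾ α = b_α}` (i.e. the set of `α < ω₁` such that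
`b_α` is the unique element of `f` on the `α`-th level) is stationary. -/
def Diamond (t : OTree) : Prop :=
  ∃ b : Ordinal → t.carrier,
    (∀ α < omega1, b α ∈ t.level α) ∧
    ∀ f ∈ t.branches,
      IsStationaryBelow {α | α < omega1 ∧ f ∩ t.level α = {b α}}

/-- A tree has height `ω₁` if every node has countable height
and every countable level is nonempty. -/
def HasHeightOmega1 (t : OTree) : Prop :=
  (∀ x, t.height x < omega1) ∧ ∀ α < omega1, (t.level α).Nonempty

end OTree

/-- The weak club principle `♣_w`: there is a sequence `⟨A_α | α ∈ acc(ω₁)⟩` such that each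
`A_α` is a cofinal subset of `α` of order type `ω`, and for every uncountable `A ⊆ ω₁` the set
`{α ∈ acc(ω₁) | A_α \ A is finite}` is stationary. -/
def WeakClubPrinciple : Prop :=
  ∃ A : Ordinal.{0} → Set Ordinal.{0},
    (∀ α, α < omega1 → Order.IsSuccLimit α →
      A α ⊆ Set.Iio α ∧
      (∀ β < α, ∃ γ ∈ A α, β < γ) ∧
      (∀ β < α, (A α ∩ Set.Iio β).Finite)) ∧
    ∀ B : Set Ordinal, B ⊆ Set.Iio omega1 → ¬ B.Countable →
      IsStationaryBelow {α | α < omega1 ∧ Order.IsSuccLimit α ∧ (A α \ B).Finite}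

open Ordinal Order

theorem omega1_eq_omega_one : omega1 = ω₁ := Cardinal.ord_aleph 1

theorem isSuccLimit_omega1 : IsSuccLimit omega1 :=
  Cardinal.isSuccLimit_ord (Cardinal.aleph0_le_aleph 1)

theorem aleph0_lt_cof_omega1 : ℵ₀ < omega1.cof := by
  rw [omega1_eq_omega_one, cof_omega_one]
  exact Cardinal.aleph0_lt_aleph_one

theorem omega0_lt_omega1 : ω < omega1 := omega1_eq_omega_one ▸ omega0_lt_omega_one

theorem omega0_mul_lt_omega1 {a : Ordinal} (ha : a < omega1) : ω * a < omega1 :=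
  isPrincipal_mul_ord (Cardinal.aleph0_le_aleph 1) omega0_lt_omega1 ha

theorem not_countable_Iio_omega1 : ¬ (Iio omega1).Countable := by
  rw [← Cardinal.le_aleph0_iff_set_countable, Cardinal.mk_Iio_ordinal, omega1, Cardinal.card_ord,
    Cardinal.lift_aleph, not_le]
  simp

theorem IsClubBelow.isClub_preimage {C : Set Ordinal} (hC : IsClubBelow C) :
    IsClub (Subtype.val ⁻¹' C : Set (Iio omega1)) := by
  obtain ⟨hCω, hunb, hsup⟩ := hC
  refine ⟨fun d hdC hd _ a ha => ?_, ?_⟩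
  · have hlub : IsLUB (Subtype.val '' d) a.1 := by
      refine ⟨?_, fun c hc => ?_⟩
      · rintro _ ⟨x, hx, rfl⟩
        exact ha.1 hx
      · rcases lt_or_ge c omega1 with hc1 | hc1
        · have hc' : (⟨c, hc1⟩ : Iio omega1) ∈ upperBounds d := fun x hx => hc ⟨x, hx, rfl⟩
          exact ha.2 hc'
        · exact a.2.le.trans hc1
    rw [mem_preimage, ← hlub.csSup_eq (hd.image _)]
    exact hsup _ (image_subset_iff.2 hdC) (hd.image _) (hlub.csSup_eq (hd.image _) ▸ a.2)
  · intro b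
    obtain ⟨a, haC, hba⟩ := hunb b b.2
    exact ⟨⟨a, hCω haC⟩, haC, hba.le⟩

theorem IsClub.isClubBelow_image {s : Set (Iio omega1)} (hs : IsClub s) :
    IsClubBelow (Subtype.val '' s) := by
  refine ⟨image_subset_iff.2 fun a _ => a.2, fun b hb => ?_, fun d hds hd hdω => ?_⟩
  · obtain ⟨a, has, hba⟩ := hs.isCofinal ⟨succ b, isSuccLimit_omega1.succ_lt hb⟩
    exact ⟨a, mem_image_of_mem _ has, (lt_succ b).trans_le hba⟩
  · have hbdd : BddAbove d := ⟨omega1, fun x hx => by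
      obtain ⟨y, -, rfl⟩ := hds hx
      exact y.2.le⟩
    have hlub : IsLUB (Subtype.val ⁻¹' d) (⟨sSup d, hdω⟩ : Iio omega1) := by
      refine ⟨fun x hx => le_csSup hbdd hx, fun b hb => csSup_le hd fun x hx => ?_⟩
      obtain ⟨y, -, rfl⟩ := hds hx
      exact hb hx
    have hds' : Subtype.val ⁻¹' d ⊆ s := fun x hx => by
      obtain ⟨y, hy, hyx⟩ := hds hx
      rwa [← Subtype.ext hyx]
    obtain ⟨x, hx⟩ := hd
    obtain ⟨y, -, rfl⟩ := hds hx
    exact ⟨_, hs.isLUB_mem hds' ⟨y, hx⟩ hlub, rfl⟩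

theorem IsClubBelow.inter {C D : Set Ordinal} (hC : IsClubBelow C) (hD : IsClubBelow D) :
    IsClubBelow (C ∩ D) := by
  have hcof : Order.cof (Iio omega1) ≠ ℵ₀ := by
    rw [cof_Iio, ← lift_cof, Ne, Cardinal.lift_eq_aleph0]
    exact aleph0_lt_cof_omega1.ne'
  convert (hC.isClub_preimage.inter hcof hD.isClub_preimage).isClubBelow_image
  ext a
  constructor
  · exact fun ha => ⟨⟨a, hC.1 ha.1⟩, ha, rfl⟩
  · rintro ⟨b, hb, rfl⟩
    exact hb

theorem Order.IsNormal.isClubBelow_fixedPoints {f : Ordinal → Ordinal} (hf : IsNormal f)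
    (hfω : ∀ a < omega1, f a < omega1) : IsClubBelow {α | α < omega1 ∧ f α = α} := by
  refine ⟨fun α hα => hα.1, fun β hβ => ?_, fun s hs hne hsω => ⟨hsω, ?_⟩⟩
  · exact ⟨nfp f (succ β), ⟨nfp_lt_ord aleph0_lt_cof_omega1 hfω (isSuccLimit_omega1.succ_lt hβ),
      nfp_fp hf _⟩, (lt_succ β).trans_le (le_nfp f _)⟩
  · have hbdd : BddAbove s := ⟨omega1, fun a ha => (hs ha).1.le⟩
    rw [hf.map_sSup hne hbdd, image_congr fun a ha => (hs ha).2, image_id']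

theorem exists_gt_mem_sdiff_of_finite {A F : Set Ordinal} {α β : Ordinal}
    (hA : ∀ β < α, ∃ γ ∈ A, β < γ) (hF : F.Finite) (hFα : F ⊆ Iio α) (hβ : β < α) :
    ∃ γ ∈ A \ F, β < γ := by
  have hfin := hF.insert β
  have hδα := insert_subset hβ hFα ((insert_nonempty β F).csSup_mem hfin)
  obtain ⟨γ, hγA, hγ⟩ := hA _ hδα
  refine ⟨γ, ⟨hγA, fun hγF => ?_⟩, (le_csSup hfin.bddAbove (mem_insert β F)).trans_lt hγ⟩
  exact (le_csSup hfin.bddAbove (mem_insert_of_mem β hγF)).not_gt hγ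

theorem exists_transversal {T : Set BinSeq} (hT : ∀ α < omega1, ∃ u ∈ T, u.1 = α)
    (P : Ordinal → BinSeq → Prop) :
    ∃ t : Ordinal → BinSeq, (∀ α < omega1, t α ∈ T ∧ (t α).1 = α) ∧
      ∀ α < omega1, ∀ u ∈ T, u.1 = α → P α u → P α (t α) := by
  have hchoice (α : Ordinal) : ∃ v : BinSeq, α < omega1 →
      (v ∈ T ∧ v.1 = α) ∧ ∀ u ∈ T, u.1 = α → P α u → P α v := by
    by_cases hP : ∃ u ∈ T, u.1 = α ∧ P α u
    · obtain ⟨u, huT, hu, hPu⟩ := hP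
      exact ⟨u, fun _ => ⟨⟨huT, hu⟩, fun _ _ _ _ => hPu⟩⟩
    rcases lt_or_ge α omega1 with hα | hα
    · obtain ⟨v, hvT, hv⟩ := hT α hα
      exact ⟨v, fun _ => ⟨⟨hvT, hv⟩, fun u huT hu hPu => absurd ⟨u, huT, hu, hPu⟩ hP⟩⟩
    · exact ⟨⟨0, fun _ => false⟩, fun h => absurd h hα.not_gt⟩
  choose t ht using hchoice
  exact ⟨t, fun α hα => (ht α hα).1, fun α hα => (ht α hα).2⟩

theorem IsBinaryKurepa.nonempty_binBranches {T : Set BinSeq} (hT : IsBinaryKurepa T) :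
    (BinBranches T).Nonempty := by
  rw [← nonempty_coe_sort, ← Cardinal.mk_ne_zero_iff]
  exact ((Cardinal.aleph_pos 2).trans_le hT.2).ne'

structure IsLevelCode (T : Set BinSeq) (e : BinSeq → Ordinal) : Prop where
  injOn : InjOn e T
  mem_Ico : ∀ s ∈ T, e s ∈ Ico (ω * s.1) (ω * succ s.1)

theorem IsBinaryAleph1Tree.exists_isLevelCode {T : Set BinSeq} (hT : IsBinaryAleph1Tree T) :
    ∃ e, IsLevelCode T e := by
  have hlevel (α : Ordinal) : ∃ j : BinSeq → ℕ, InjOn j {t | t ∈ T ∧ t.1 = α} := by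
    rcases lt_or_ge α omega1 with hα | hα
    · exact countable_iff_exists_injOn.1 (hT.countable_levels α hα)
    · exact ⟨0, fun t ht => absurd (ht.2 ▸ hT.dom_lt t ht.1) hα.not_gt⟩
  choose j hj using hlevel
  have hdiv (a : Ordinal) (n : ℕ) : (ω * a + n) / ω = a := by
    rw [mul_add_div a omega0_ne_zero, div_eq_zero_of_lt (natCast_lt_omega0 n), add_zero]
  have hmod (a : Ordinal) (n : ℕ) : (ω * a + n) % ω = n := by
    rw [mul_add_mod_self, mod_eq_of_lt (natCast_lt_omega0 n)]
  refine ⟨fun s => ω * s.1 + j s.1 s, fun s hs t ht hst => ?_, fun s _ => ⟨le_self_add, ?_⟩⟩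
  · have hdom : s.1 = t.1 := by rw [← hdiv s.1 (j s.1 s), ← hdiv t.1 (j t.1 t), hst]
    have hcode : j s.1 s = j t.1 t := by
      exact_mod_cast (hmod s.1 (j s.1 s)).symm.trans ((congrArg (· % ω) hst).trans (hmod _ _))
    rw [hdom] at hcode
    exact hj t.1 ⟨hs, hdom⟩ ⟨ht, rfl⟩ hcode
  · rw [mul_succ]
    exact (add_lt_add_iff_left _).2 (natCast_lt_omega0 _)

def initialSegmentCodes (T : Set BinSeq) (e : BinSeq → Ordinal) (u : BinSeq) : Set Ordinal :=
  e '' {s | s ∈ T ∧ s.ssub u}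

def branchCodes (e : BinSeq → Ordinal) (f : BinBranch) : Set Ordinal :=
  range fun β : Iio omega1 => e (f.restrict β β.2)

namespace IsLevelCode

variable {T : Set BinSeq} {e : BinSeq → Ordinal} {s t : BinSeq} {f : BinBranch}

theorem dom_le_apply (he : IsLevelCode T e) (hs : s ∈ T) : s.1 ≤ e s :=
  (le_mul_right s.1 omega0_pos).trans (he.mem_Ico s hs).1

theorem apply_lt_apply (he : IsLevelCode T e) (hs : s ∈ T) (ht : t ∈ T) (h : s.1 < t.1) :
    e s < e t :=
  (he.mem_Ico s hs).2.trans_le <| (mul_le_mul_right (succ_le_of_lt h) ω).trans (he.mem_Ico t ht).1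

theorem dom_le_dom_of_apply_lt (he : IsLevelCode T e) (hs : s ∈ T) (ht : t ∈ T) (h : e s < e t) :
    s.1 ≤ t.1 :=
  not_lt.1 fun h' => (he.apply_lt_apply ht hs h').not_gt h

theorem apply_lt (he : IsLevelCode T e) {α : Ordinal} (hα : IsSuccLimit α)
    (hαω : ∀ a < α, ω * a < α) (hs : s ∈ T) (h : s.1 < α) : e s < α :=
  (he.mem_Ico s hs).2.trans (hαω _ (hα.succ_lt h))

theorem lt_of_restrict_lt (he : IsLevelCode T e) (hf : f ∈ BinBranches T) {a b : Ordinal}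
    (ha : a < omega1) (hb : b < omega1) (h : e (f.restrict a ha) < e (f.restrict b hb)) :
    a < b := by
  refine (he.dom_le_dom_of_apply_lt (hf a ha) (hf b hb) h).lt_of_ne ?_
  rintro rfl
  exact h.false

theorem branchCodes_subset (he : IsLevelCode T e) (hf : f ∈ BinBranches T) :
    branchCodes e f ⊆ Iio omega1 := by
  rintro _ ⟨β, rfl⟩
  exact he.apply_lt isSuccLimit_omega1 (fun _ => omega0_mul_lt_omega1) (hf β β.2) β.2

theorem not_countable_branchCodes (he : IsLevelCode T e) (hf : f ∈ BinBranches T) :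
    ¬ (branchCodes e f).Countable := by
  intro h
  have hinj : Function.Injective fun β : Iio omega1 => e (f.restrict β β.2) := fun β γ hβγ =>
    Subtype.ext (congrArg Sigma.fst (he.injOn (hf β β.2) (hf γ γ.2) hβγ))
  exact not_countable_Iio_omega1 <| countable_coe_iff.1 <| countable_univ_iff.1 <|
    (mapsTo_range _ univ).countable_of_injOn hinj.injOn h

theorem sdiff_initialSegmentCodes_subset (he : IsLevelCode T e) (hf : f ∈ BinBranches T)
    {α : Ordinal} (hα : α < omega1) {A : Set Ordinal} (hAα : A ⊆ Iio α) :
    A \ initialSegmentCodes T e (f.restrict α hα) ⊆ A \ branchCodes e f := by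
  rintro ξ ⟨hξA, hξ⟩
  refine ⟨hξA, ?_⟩
  rintro ⟨β, rfl⟩
  exact hξ ⟨f.restrict β β.2, ⟨hf β β.2, (he.dom_le_apply (hf β β.2)).trans_lt (hAα hξA), rfl⟩, rfl⟩

theorem restrict_eq_of_finite_sdiff (he : IsLevelCode T e) (hf : f ∈ BinBranches T)
    {α : Ordinal} (hα : α < omega1) (hlim : IsSuccLimit α) (hαω : ∀ a < α, ω * a < α)
    {A : Set Ordinal} (hAα : A ⊆ Iio α) (hAcof : ∀ β < α, ∃ γ ∈ A, β < γ)
    (hAf : (A \ branchCodes e f).Finite) {u : BinSeq}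
    (hu : (A \ initialSegmentCodes T e u).Finite) (huα : u.1 = α) : f.restrict α hα = u := by
  obtain ⟨α, g⟩ := u
  subst huα
  refine Sigma.ext rfl (heq_of_eq (funext fun x => ?_))
  have hx := x.2.trans hα
  obtain ⟨ξ, ⟨hξA, hξbad⟩, hxξ⟩ := exists_gt_mem_sdiff_of_finite hAcof (hAf.union hu)
    (union_subset (sdiff_subset.trans hAα) (sdiff_subset.trans hAα))
    (he.apply_lt hlim hαω (hf x hx) x.2)
  obtain ⟨β, rfl⟩ : ξ ∈ branchCodes e f := not_not.1 fun h => hξbad (.inl ⟨hξA, h⟩)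
  obtain ⟨s, ⟨hsT, hβα, hsu⟩, hs⟩ : _ ∈ initialSegmentCodes T e _ :=
    not_not.1 fun h => hξbad (.inr ⟨hξA, h⟩)
  obtain rfl : s = f.restrict β β.2 := he.injOn hsT (hf β β.2) hs
  have hxβ : x.1 < β := he.lt_of_restrict_lt hf hx β.2 hxξ
  exact (congrFun (eq_of_heq (Sigma.mk.inj_iff.1 hsu).2) ⟨x, hxβ⟩).symm

end IsLevelCode

/-- If `♣_w` holds, then `◇(T)` holds for every binary Kurepa tree `T`. -/
theorem statement4 (hw : WeakClubPrinciple) (T : Set BinSeq) (hT : IsBinaryKurepa T) :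
    BinDiamond T := by
  obtain ⟨A, hA, hAguess⟩ := hw
  obtain ⟨e, he⟩ := hT.1.exists_isLevelCode
  obtain ⟨f₀, hf₀⟩ := hT.nonempty_binBranches
  obtain ⟨t, htT, ht⟩ := exists_transversal (fun α hα => ⟨f₀.restrict α hα, hf₀ α hα, rfl⟩)
    fun α u => (A α \ initialSegmentCodes T e u).Finite
  refine ⟨t, htT, fun f hf D hD => ?_⟩
  have hfix : IsClubBelow {α | α < omega1 ∧ ω * α = α} :=
    (isNormal_mul_right omega0_pos).isClubBelow_fixedPoints fun _ => omega0_mul_lt_omega1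
  obtain ⟨α, ⟨hα, hlim, hAf⟩, ⟨-, hαfix⟩, hαD⟩ := hAguess _ (he.branchCodes_subset hf)
    (he.not_countable_branchCodes hf) _ (hfix.inter hD)
  obtain ⟨hAα, hAcof, -⟩ := hA α hα hlim
  have hαω (a : Ordinal) (ha : a < α) : ω * a < α :=
    hαfix ▸ (isNormal_mul_right omega0_pos).strictMono ha
  have htα : (A α \ initialSegmentCodes T e (t α)).Finite :=
    ht α hα _ (hf α hα) rfl (hAf.subset (he.sdiff_initialSegmentCodes_subset hf hα hAα))
  exact ⟨α, ⟨hα, he.restrict_eq_of_finite_sdiff hf hα hlim hαω hAα hAcof hAf htα (htT α hα).2⟩,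
    hαD⟩
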